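/- Let X be a complex Banach space, n ≥ 1, x ∈ X, and let f : [0,∞)^n → X be locally Bochner integrable. Suppose there exist ω₁,…,ωₙ ∈ ℝ such that sup{‖e^{−ω₁t₁−…−ωₙtₙ} f(t₁,…,tₙ)‖ : t₁ ≥ 0,…,tₙ ≥ 0} < ∞. If f(t₁,…,tₙ) → x as (t₁,…,tₙ) → (0,…,0) in [0,∞)^n, then for all real λⱼ > max(ωⱼ,0) one has λ ∈ Ω_abs(f), and λ₁·…·λₙ·(Lf)(λ₁,…,λₙ) → x as λ₁ → +∞, …, λₙ → +∞ (i.e. for every ε > 0 there is M > 0 such that ‖λ₁·…·λₙ·(Lf)(λ) − x‖ < ε whenever the real numbers λⱼ all exceed M). -/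

import Mathlib

open MeasureTheory Set Filter

noncomputable section

/-- The nonnegative orthant `[0,∞)^n`. -/
def orthant (n : ℕ) : Set (Fin n → ℝ) := {t | ∀ j, 0 ≤ t j}

/-- The box `[0,t₁] × … × [0,tₙ]`. -/
def box {n : ℕ} (t : Fin n → ℝ) : Set (Fin n → ℝ) := Set.univ.pi fun j => Set.Icc 0 (t j)

variable {X : Type*} [NormedAddCommGroup X] [NormedSpace ℂ X]

/-- The Laplace kernel `t ↦ e^{-λ₁t₁-…-λₙtₙ} f(t)`. -/
def lapKer {n : ℕ} (lam : Fin n → ℂ) (f : (Fin n → ℝ) → X) : (Fin n → ℝ) → X :=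
  fun t => Complex.exp (-(∑ j, lam j * (t j : ℂ))) • f t

/-- Absolute convergence of the Laplace integral at `lam`: membership in `Ω_abs(f)`. -/
def OmegaAbs {n : ℕ} (f : (Fin n → ℝ) → X) (lam : Fin n → ℂ) : Prop :=
  IntegrableOn (lapKer lam f) (orthant n)

/-- The (absolutely convergent) Laplace transform `(Lf)(λ)`. -/
def lapTr {n : ℕ} (f : (Fin n → ℝ) → X) (lam : Fin n → ℂ) : X :=
  ∫ t in orthant n, lapKer lam f t

/-- The truncated Laplace integral `I(f,λ,t)`. -/
def truncInt {n : ℕ} (f : (Fin n → ℝ) → X) (lam : Fin n → ℂ) (t : Fin n → ℝ) : X :=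
  ∫ s in box t, lapKer lam f s

/-- Convergence of the Laplace integral at `lam` with value `F`. -/
def LapConvTo {n : ℕ} (f : (Fin n → ℝ) → X) (lam : Fin n → ℂ) (F : X) : Prop :=
  ∀ ε > 0, ∃ M > 0, ∀ t : Fin n → ℝ, (∀ j, M < t j) → ‖truncInt f lam t - F‖ < ε

/-- Convergence of the Laplace integral at `lam`: membership in `Ω(f)`. -/
def OmegaConv {n : ℕ} (f : (Fin n → ℝ) → X) (lam : Fin n → ℂ) : Prop :=
  ∃ F, LapConvTo f lam F

/-- Boundedness of all truncated Laplace integrals: membership in `Ω_b(f)`. -/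
def OmegaBdd {n : ℕ} (f : (Fin n → ℝ) → X) (lam : Fin n → ℂ) : Prop :=
  ∃ C, ∀ t : Fin n → ℝ, ‖truncInt f lam t‖ ≤ C

/-- Local Bochner integrability on `[0,∞)^n`. -/
def LocInt {n : ℕ} (f : (Fin n → ℝ) → X) : Prop :=
  ∀ t : Fin n → ℝ, IntegrableOn f (box t)

/- Substituting `t = λ⁻¹ * s` gives `λ₁⋯λₙ (Lf)(λ) = ∫ e^{-(s₁+⋯+sₙ)} f(λ⁻¹ * s) ds` over the
orthant, an integral against a fixed measure. As `λ → ∞` the integrand tends pointwise to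
`e^{-(s₁+⋯+sₙ)} x`, and once `λⱼ > 2ωⱼ` the growth bound `‖f t‖ ≤ C e^{ω·t}` dominates it by
`C e^{-(s₁+⋯+sₙ)/2}`, so dominated convergence gives the limit `∫ e^{-(s₁+⋯+sₙ)} x ds = x`. -/

open Topology

section

variable {n : ℕ}

lemma orthant_eq_pi : orthant n = univ.pi fun _ => Ici 0 := by
  ext t; simp [orthant, Pi.le_def]

lemma measurableSet_orthant : MeasurableSet (orthant n) := by
  rw [orthant_eq_pi]; exact .univ_pi fun _ => measurableSet_Ici

lemma mul_mem_orthant {c t : Fin n → ℝ} (hc : ∀ j, 0 ≤ c j) (ht : t ∈ orthant n) :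
    c * t ∈ orthant n :=
  fun j => mul_nonneg (hc j) (ht j)

lemma image_mul_orthant {c : Fin n → ℝ} (hc : ∀ j, 0 < c j) :
    (c * ·) '' orthant n = orthant n := by
  refine Subset.antisymm ?_ fun t ht =>
    ⟨c⁻¹ * t, mul_mem_orthant (fun j => inv_nonneg.2 (hc j).le) ht, ?_⟩
  · rintro _ ⟨t, ht, rfl⟩
    exact mul_mem_orthant (fun j => (hc j).le) ht
  · ext j; simp [(hc j).ne']

def diagCLM (c : Fin n → ℝ) : (Fin n → ℝ) →L[ℝ] (Fin n → ℝ) :=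
  (Matrix.toLin' (Matrix.diagonal c)).toContinuousLinearMap

lemma coe_diagCLM (c : Fin n → ℝ) : ⇑(diagCLM c) = (c * ·) := by
  ext s j; simp [diagCLM, Matrix.mulVec_diagonal]

lemma det_diagCLM (c : Fin n → ℝ) : (diagCLM c).det = ∏ j, c j := by
  simp [diagCLM, ContinuousLinearMap.det]

lemma injective_diagCLM {c : Fin n → ℝ} (hc : ∀ j, c j ≠ 0) :
    Function.Injective (diagCLM c) := by
  intro s t h
  ext j
  simpa [coe_diagCLM, hc j] using congrFun h j

lemma integrableOn_orthant_comp_mul_iff {E : Type*} [NormedAddCommGroup E] [NormedSpace ℝ E]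
    {c : Fin n → ℝ} (hc : ∀ j, 0 < c j) (g : (Fin n → ℝ) → E) :
    IntegrableOn (fun s => g (c * s)) (orthant n) ↔ IntegrableOn g (orthant n) := by
  have := integrableOn_image_iff_integrableOn_abs_det_fderiv_smul volume measurableSet_orthant
    (fun s _ => (diagCLM c).hasFDerivAt.hasFDerivWithinAt)
    (injective_diagCLM fun j => (hc j).ne').injOn g
  rw [coe_diagCLM, image_mul_orthant hc, det_diagCLM,
    abs_of_pos (Finset.prod_pos fun j _ => hc j)] at this
  exact (this.trans (integrable_smul_iff (Finset.prod_pos fun j _ => hc j).ne' _)).symm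

lemma integral_orthant_eq_smul_integral_comp_mul {E : Type*} [NormedAddCommGroup E]
    [NormedSpace ℝ E] {c : Fin n → ℝ} (hc : ∀ j, 0 < c j) (g : (Fin n → ℝ) → E) :
    ∫ t in orthant n, g t = (∏ j, c j) • ∫ s in orthant n, g (c * s) := by
  have := integral_image_eq_integral_abs_det_fderiv_smul volume measurableSet_orthant
    (fun s _ => (diagCLM c).hasFDerivAt.hasFDerivWithinAt)
    (injective_diagCLM fun j => (hc j).ne').injOn g
  rw [coe_diagCLM, image_mul_orthant hc, det_diagCLM,
    abs_of_pos (Finset.prod_pos fun j _ => hc j)] at this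
  rw [this, integral_smul]

lemma restrict_orthant :
    volume.restrict (orthant n) = Measure.pi fun _ => volume.restrict (Ici (0 : ℝ)) := by
  rw [orthant_eq_pi, volume_pi, Measure.restrict_pi_pi]

lemma exp_neg_sum (t : Fin n → ℝ) : Real.exp (-∑ j, t j) = ∏ j, Real.exp (-t j) := by
  rw [← Finset.sum_neg_distrib, Real.exp_sum]

lemma integrableOn_Ici_exp_neg : IntegrableOn (fun y : ℝ => Real.exp (-y)) (Ici 0) := by
  rw [integrableOn_Ici_iff_integrableOn_Ioi]
  exact integrableOn_exp_neg_Ioi 0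

lemma integrableOn_orthant_exp_neg_sum :
    IntegrableOn (fun t : Fin n → ℝ => Real.exp (-∑ j, t j)) (orthant n) := by
  simp only [IntegrableOn, restrict_orthant, exp_neg_sum]
  exact Integrable.fintype_prod (f := fun _ y => Real.exp (-y)) fun _ => integrableOn_Ici_exp_neg

lemma integral_orthant_exp_neg_sum : ∫ t in orthant n, Real.exp (-∑ j, t j) = 1 := by
  simp only [restrict_orthant, exp_neg_sum]
  rw [integral_fintype_prod_eq_prod (f := fun _ y => Real.exp (-y))]
  exact Finset.prod_eq_one fun _ _ => by
    rw [integral_Ici_eq_integral_Ioi, integral_exp_neg_Ioi_zero]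

lemma integrableOn_orthant_exp_neg_sum_mul {c : Fin n → ℝ} (hc : ∀ j, 0 < c j) :
    IntegrableOn (fun t : Fin n → ℝ => Real.exp (-∑ j, c j * t j)) (orthant n) := by
  simpa only [Pi.mul_apply] using
    (integrableOn_orthant_comp_mul_iff hc _).2 integrableOn_orthant_exp_neg_sum

lemma LocInt.aestronglyMeasurable {E : Type*} [NormedAddCommGroup E] {f : (Fin n → ℝ) → E}
    (hf : LocInt f) :
    AEStronglyMeasurable f (volume.restrict (orthant n)) := by
  have hcover : orthant n ⊆ ⋃ k : ℕ, box fun _ => (k : ℝ) := fun t ht => by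
    obtain ⟨k, hk⟩ := exists_nat_ge (∑ j, t j)
    exact mem_iUnion.2 ⟨k, fun j _ =>
      ⟨ht j, (Finset.single_le_sum (fun i _ => ht i) (Finset.mem_univ j)).trans hk⟩⟩
  exact (aestronglyMeasurable_iUnion_iff.2 fun k => (hf _).aestronglyMeasurable).mono_set hcover

lemma lapKer_ofReal (lam : Fin n → ℝ) (f : (Fin n → ℝ) → X) (t : Fin n → ℝ) :
    lapKer (fun j => (lam j : ℂ)) f t = Real.exp (-∑ j, lam j * t j) • f t := by
  rw [lapKer, ← Complex.coe_smul]
  push_cast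
  rfl

lemma omegaAbs_of_norm_le {f : (Fin n → ℝ) → X} {C : ℝ} {ω lam : Fin n → ℝ} (hf : LocInt f)
    (hC : ∀ t ∈ orthant n, ‖f t‖ ≤ C * Real.exp (∑ j, ω j * t j)) (hlam : ∀ j, ω j < lam j) :
    OmegaAbs f (fun j => (lam j : ℂ)) := by
  have hdom := (integrableOn_orthant_exp_neg_sum_mul (c := lam - ω)
    fun j => sub_pos.2 (hlam j)).const_mul C
  rw [OmegaAbs, funext (lapKer_ofReal lam f)]
  have hcont : Continuous fun t : Fin n → ℝ => Real.exp (-∑ j, lam j * t j) := by fun_prop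
  refine hdom.mono' (hcont.aestronglyMeasurable.smul hf.aestronglyMeasurable)
    (ae_restrict_of_forall_mem measurableSet_orthant fun t ht => ?_)
  have hexp : Real.exp (-∑ j, lam j * t j) * Real.exp (∑ j, ω j * t j) =
      Real.exp (-∑ j, (lam - ω) j * t j) := by
    simp only [← Real.exp_add, Pi.sub_apply, sub_mul, Finset.sum_sub_distrib]
    ring_nf
  calc ‖Real.exp (-∑ j, lam j * t j) • f t‖
      = Real.exp (-∑ j, lam j * t j) * ‖f t‖ := by
        rw [norm_smul, Real.norm_of_nonneg (Real.exp_nonneg _)]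
    _ ≤ Real.exp (-∑ j, lam j * t j) * (C * Real.exp (∑ j, ω j * t j)) :=
        mul_le_mul_of_nonneg_left (hC t ht) (Real.exp_nonneg _)
    _ = C * Real.exp (-∑ j, (lam - ω) j * t j) := by rw [← hexp]; ring

lemma lapKer_inv_mul {lam : Fin n → ℝ} (hlam : ∀ j, lam j ≠ 0) (f : (Fin n → ℝ) → X)
    (s : Fin n → ℝ) :
    lapKer (fun j => (lam j : ℂ)) f (lam⁻¹ * s) = Real.exp (-∑ j, s j) • f (lam⁻¹ * s) := by
  simp only [lapKer_ofReal, Pi.mul_apply, Pi.inv_apply, mul_inv_cancel_left₀ (hlam _)]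

lemma integrableOn_rescaled_iff {lam : Fin n → ℝ} (hlam : ∀ j, 0 < lam j)
    (f : (Fin n → ℝ) → X) :
    IntegrableOn (fun s => Real.exp (-∑ j, s j) • f (lam⁻¹ * s)) (orthant n) ↔
      OmegaAbs f (fun j => (lam j : ℂ)) := by
  simp only [← lapKer_inv_mul (fun j => (hlam j).ne')]
  exact integrableOn_orthant_comp_mul_iff (fun j => inv_pos.2 (hlam j)) _

lemma smul_lapTr_eq_integral_rescaled {lam : Fin n → ℝ} (hlam : ∀ j, 0 < lam j)
    (f : (Fin n → ℝ) → X) :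
    (∏ j, (lam j : ℂ)) • lapTr f (fun j => (lam j : ℂ)) =
      ∫ s in orthant n, Real.exp (-∑ j, s j) • f (lam⁻¹ * s) := by
  have hprod : (∏ j, lam j) * ∏ j, lam⁻¹ j = 1 := by
    rw [← Finset.prod_mul_distrib]
    exact Finset.prod_eq_one fun j _ => mul_inv_cancel₀ (hlam j).ne'
  rw [lapTr,
    integral_orthant_eq_smul_integral_comp_mul (c := lam⁻¹) (fun j => inv_pos.2 (hlam j)),
    ← Complex.ofReal_prod, Complex.coe_smul, smul_smul, hprod, one_smul]
  simp only [lapKer_inv_mul fun j => (hlam j).ne']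

lemma tendsto_nhdsWithin_orthant_of_forall {E : Type*} [SeminormedAddCommGroup E]
    {f : (Fin n → ℝ) → E} {x : E}
    (hx : ∀ ε > 0, ∃ δ > 0, ∀ t ∈ orthant n, (∀ j, t j < δ) → ‖f t - x‖ < ε) :
    Tendsto f (𝓝[orthant n] 0) (𝓝 x) := by
  refine Metric.tendsto_nhdsWithin_nhds.2 fun ε hε => ?_
  obtain ⟨δ, hδ, hfδ⟩ := hx ε hε
  refine ⟨δ, hδ, fun {t} ht htδ => ?_⟩
  rw [dist_eq_norm]
  refine hfδ t ht fun j => ?_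
  have := (dist_pi_lt_iff hδ).1 htδ j
  rw [Pi.zero_apply, Real.dist_eq, sub_zero] at this
  exact (le_abs_self _).trans_lt this

lemma tendsto_inv_mul_nhdsWithin_orthant {s : Fin n → ℝ} (hs : s ∈ orthant n) :
    Tendsto (fun lam => lam⁻¹ * s) (Filter.pi fun _ => atTop) (𝓝[orthant n] 0) := by
  refine tendsto_nhdsWithin_iff.2 ⟨tendsto_pi_nhds.2 fun j => ?_, ?_⟩
  · simpa using (tendsto_inv_atTop_zero.comp (tendsto_eval_pi _ j)).mul_const (s j)
  · filter_upwards [eventually_pi fun _ => eventually_gt_atTop 0] with lam hlam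
    exact mul_mem_orthant (fun j => inv_nonneg.2 (hlam j).le) hs

lemma exists_forall_of_eventually_pi_atTop {ι : Type*} {p : (ι → ℝ) → Prop}
    (h : ∀ᶠ lam in Filter.pi fun _ : ι => atTop, p lam) :
    ∃ M > 0, ∀ lam, (∀ j, M < lam j) → p lam := by
  obtain ⟨⟨I, a⟩, -, hI⟩ := atTop_basis_Ioi.pi_self.mem_iff.1 h
  exact ⟨max a 1, by positivity, fun lam hlam =>
    hI fun j _ => (le_max_left a 1).trans_lt (hlam j)⟩

lemma norm_rescaled_le {E : Type*} [NormedAddCommGroup E] [NormedSpace ℝ E]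
    {f : (Fin n → ℝ) → E} {C : ℝ} {ω lam s : Fin n → ℝ}
    (hC : ∀ t ∈ orthant n, ‖f t‖ ≤ C * Real.exp (∑ j, ω j * t j))
    (hlam : ∀ j, 0 < lam j ∧ 2 * ω j < lam j) (hs : s ∈ orthant n) :
    ‖Real.exp (-∑ j, s j) • f (lam⁻¹ * s)‖ ≤ C * Real.exp (-∑ j, 1 / 2 * s j) := by
  have hC0 : 0 ≤ C := by
    simpa [orthant] using (norm_nonneg _).trans (hC 0 fun _ => le_rfl)
  have hterm : ∀ j, ω j * (lam⁻¹ * s) j ≤ s j - 1 / 2 * s j := fun j => by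
    have hratio : ω j / lam j ≤ 1 / 2 := by
      rw [div_le_iff₀ (hlam j).1]; linarith [(hlam j).2]
    calc ω j * (lam⁻¹ * s) j = ω j / lam j * s j := by
          simp only [Pi.mul_apply, Pi.inv_apply]; ring
      _ ≤ 1 / 2 * s j := mul_le_mul_of_nonneg_right hratio (hs j)
      _ = s j - 1 / 2 * s j := by ring
  have hexp : -∑ j, s j + ∑ j, ω j * (lam⁻¹ * s) j ≤ -∑ j, 1 / 2 * s j := by
    have := Finset.sum_le_sum fun j (_ : j ∈ Finset.univ) => hterm j
    rw [Finset.sum_sub_distrib] at this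
    linarith
  calc ‖Real.exp (-∑ j, s j) • f (lam⁻¹ * s)‖
      = Real.exp (-∑ j, s j) * ‖f (lam⁻¹ * s)‖ := by
        rw [norm_smul, Real.norm_of_nonneg (Real.exp_nonneg _)]
    _ ≤ Real.exp (-∑ j, s j) * (C * Real.exp (∑ j, ω j * (lam⁻¹ * s) j)) :=
        mul_le_mul_of_nonneg_left
          (hC _ (mul_mem_orthant (fun j => inv_nonneg.2 (hlam j).1.le) hs)) (Real.exp_nonneg _)
    _ = C * Real.exp (-∑ j, s j + ∑ j, ω j * (lam⁻¹ * s) j) := by rw [Real.exp_add]; ring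
    _ ≤ C * Real.exp (-∑ j, 1 / 2 * s j) :=
        mul_le_mul_of_nonneg_left (Real.exp_le_exp.2 hexp) hC0

theorem tendsto_smul_lapTr [CompleteSpace X] {f : (Fin n → ℝ) → X} {x : X} {C : ℝ}
    {ω : Fin n → ℝ} (hf : LocInt f)
    (hC : ∀ t ∈ orthant n, ‖f t‖ ≤ C * Real.exp (∑ j, ω j * t j))
    (hx : Tendsto f (𝓝[orthant n] 0) (𝓝 x)) :
    Tendsto (fun lam : Fin n → ℝ => (∏ j, (lam j : ℂ)) • lapTr f (fun j => (lam j : ℂ)))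
      (Filter.pi fun _ => atTop) (𝓝 x) := by
  have hlarge : ∀ᶠ lam in Filter.pi fun _ : Fin n => atTop, ∀ j, 0 < lam j ∧ 2 * ω j < lam j :=
    eventually_pi fun j => (eventually_gt_atTop 0).and (eventually_gt_atTop _)
  have hdct : Tendsto (fun lam => ∫ s in orthant n, Real.exp (-∑ j, s j) • f (lam⁻¹ * s))
      (Filter.pi fun _ => atTop) (𝓝 (∫ s in orthant n, Real.exp (-∑ j, s j) • x)) := by
    have hdom := (integrableOn_orthant_exp_neg_sum_mul (c := fun _ : Fin n => 1 / 2)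
      fun _ => by norm_num).const_mul C
    refine tendsto_integral_filter_of_dominated_convergence _ ?_ ?_ hdom
      (ae_restrict_of_forall_mem measurableSet_orthant fun s hs =>
        ((hx.comp (tendsto_inv_mul_nhdsWithin_orthant hs)).const_smul _))
    · filter_upwards [hlarge] with lam hlam
      refine ((integrableOn_rescaled_iff (fun j => (hlam j).1) f).2 ?_).aestronglyMeasurable
      exact omegaAbs_of_norm_le hf hC fun j => by linarith [hlam j]
    · filter_upwards [hlarge] with lam hlam
      exact ae_restrict_of_forall_mem measurableSet_orthant fun s hs =>
        norm_rescaled_le hC hlam hs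
  rw [integral_smul_const, integral_orthant_exp_neg_sum, one_smul] at hdct
  refine hdct.congr' ?_
  filter_upwards [hlarge] with lam hlam
  exact (smul_lapTr_eq_integral_rescaled (fun j => (hlam j).1) f).symm

end

theorem abelian_at_zero_general [CompleteSpace X]
    (n : ℕ) (x : X) (f : (Fin n → ℝ) → X) (hf : LocInt f)
    (ω : Fin n → ℝ)
    (hbd : ∃ C, ∀ t ∈ orthant n, Real.exp (-(∑ j, ω j * t j)) * ‖f t‖ ≤ C)
    (hx : ∀ ε > 0, ∃ δ > 0, ∀ t ∈ orthant n, (∀ j, t j < δ) → ‖f t - x‖ < ε) :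
    (∀ lam : Fin n → ℝ, (∀ j, max (ω j) 0 < lam j) →
      OmegaAbs f (fun j => (lam j : ℂ))) ∧
    (∀ ε > 0, ∃ M > 0, ∀ lam : Fin n → ℝ, (∀ j, M < lam j) →
      ‖(∏ j, (lam j : ℂ)) • lapTr f (fun j => (lam j : ℂ)) - x‖ < ε) := by
  obtain ⟨C, hC⟩ := hbd
  have hfC : ∀ t ∈ orthant n, ‖f t‖ ≤ C * Real.exp (∑ j, ω j * t j) := fun t ht => by
    have := hC t ht
    rwa [Real.exp_neg, inv_mul_le_iff₀ (Real.exp_pos _), mul_comm] at this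
  refine ⟨fun lam hlam => omegaAbs_of_norm_le hf hfC fun j => (le_max_left _ _).trans_lt (hlam j),
    fun ε hε => exists_forall_of_eventually_pi_atTop ?_⟩
  have hlim := tendsto_smul_lapTr hf hfC (tendsto_nhdsWithin_orthant_of_forall hx)
  simpa only [Metric.mem_ball, dist_eq_norm] using hlim.eventually (Metric.ball_mem_nhds x hε)

/-- Abelian/Tauberian result: if `e^{−ω·t} f(t)` is bounded on `[0,∞)^n` and `f(t) → x` as
`t → 0` in `[0,∞)^n`, then for all real `λⱼ > max(ωⱼ,0)` the Laplace integral converges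
absolutely at `λ`, and `λ₁·…·λₙ·(Lf)(λ) → x` as `λ₁ → ∞, …, λₙ → ∞`. -/
theorem abelian_at_zero [CompleteSpace X]
    (n : ℕ) (hn : 1 ≤ n) (x : X) (f : (Fin n → ℝ) → X) (hf : LocInt f)
    (ω : Fin n → ℝ)
    (hbd : ∃ C, ∀ t ∈ orthant n, Real.exp (-(∑ j, ω j * t j)) * ‖f t‖ ≤ C)
    (hx : ∀ ε > 0, ∃ δ > 0, ∀ t ∈ orthant n, (∀ j, t j < δ) → ‖f t - x‖ < ε) :
    (∀ lam : Fin n → ℝ, (∀ j, max (ω j) 0 < lam j) →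
      OmegaAbs f (fun j => (lam j : ℂ))) ∧
    (∀ ε > 0, ∃ M > 0, ∀ lam : Fin n → ℝ, (∀ j, M < lam j) →
      ‖(∏ j, (lam j : ℂ)) • lapTr f (fun j => (lam j : ℂ)) - x‖ < ε) :=
  abelian_at_zero_general n x f hf ω hbd hx
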